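/- Let Σ₁, Σ₂ be d×d symmetric positive definite matrices and G a graph on {1,…,d}. For symmetric matrices Λ₁, Λ₂ supported on the sparsity pattern of G (i.e., (Λ_l)_{ij} = 0 for i ≠ j, {i,j} ∉ E(G)) with [[Λ₁, −I],[−I, Λ₂]] ⪰ 0, and for any Z₁, Z₂ ∈ 𝕊^d, Y ∈ ℝ^{d×d} with [[Z₁, Y],[Yᵀ, Z₂]] ⪰ 0 and [Z₁]_{G,0} = [Σ₁]_{G,0}, [Z₂]_{G,0} = [Σ₂]_{G,0}, one has Tr(Z₁) + Tr(Z₂) − 2Tr(Y) ≥ Tr(Σ₁) + Tr(Σ₂) − Tr(Σ₁Λ₁) − Tr(Σ₂Λ₂). -/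

import Mathlib

open Matrix BigOperators

open Classical in
noncomputable def sqrtm {d : ℕ} (A : Matrix (Fin d) (Fin d) ℝ) : Matrix (Fin d) (Fin d) ℝ :=
  if h : A.PosSemidef then
    h.1.eigenvectorUnitary.1 * diagonal ((RCLike.ofReal : ℝ → ℝ) ∘ Real.sqrt ∘ h.1.eigenvalues) *
      (star h.1.eigenvectorUnitary : Matrix (Fin d) (Fin d) ℝ)
  else 0

/-- The spectral norm (ℓ²-operator norm) of a real matrix. -/
noncomputable def specNorm {d : ℕ} (M : Matrix (Fin d) (Fin d) ℝ) : ℝ :=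
  ‖LinearMap.toContinuousLinearMap (Matrix.toEuclideanLin M)‖

/-! The dual pairing of the two block matrices is `Tr(Λ₁Z₁) + Tr(Λ₂Z₂) - 2 Tr Y`, and it is
nonnegative because the trace of a product of positive semidefinite matrices is nonnegative
(write `A = aᴴa`, so `Tr(AB) = Tr(aBaᴴ) ≥ 0`). Since `Λ_l` vanishes off the pattern of `G`,
where `Z_l` and `Σ_l` agree, `Tr(Λ_l Z_l) = Tr(Σ_l Λ_l)`; likewise `Tr Z_l = Tr Σ_l`. -/

namespace Matrix

open scoped MatrixOrder ComplexOrder in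
theorem PosSemidef.trace_mul_nonneg {n 𝕜 : Type*} [Fintype n] [DecidableEq n] [RCLike 𝕜]
    {A B : Matrix n n 𝕜} (hA : A.PosSemidef) (hB : B.PosSemidef) : 0 ≤ (A * B).trace := by
  obtain ⟨a, rfl⟩ := CStarAlgebra.nonneg_iff_eq_star_mul_self.mp hA.nonneg
  rw [star_eq_conjTranspose, mul_assoc, trace_mul_comm]
  exact (hB.mul_mul_conjTranspose_same a).trace_nonneg

theorem trace_fromBlocks {m n R : Type*} [Fintype m] [Fintype n] [AddCommMonoid R]
    (A : Matrix m m R) (B : Matrix m n R) (C : Matrix n m R) (D : Matrix n n R) :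
    (fromBlocks A B C D).trace = A.trace + D.trace := by
  simp [trace, Fintype.sum_sum_type]

theorem two_mul_trace_le_of_posSemidef_fromBlocks {n : Type*} [Fintype n] [DecidableEq n]
    {Λ₁ Λ₂ Z₁ Z₂ Y : Matrix n n ℝ} (hdual : (fromBlocks Λ₁ (-1) (-1) Λ₂).PosSemidef)
    (hprimal : (fromBlocks Z₁ Y Yᵀ Z₂).PosSemidef) :
    2 * Y.trace ≤ (Λ₁ * Z₁).trace + (Λ₂ * Z₂).trace := by
  have pairing := hdual.trace_mul_nonneg hprimal
  rw [fromBlocks_multiply, trace_fromBlocks] at pairing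
  simp only [neg_one_mul, trace_add, trace_neg, trace_transpose] at pairing
  linarith

theorem trace_mul_eq_of_eq_on_support {n R : Type*} [Fintype n] [NonUnitalNonAssocSemiring R]
    {Λ Z V : Matrix n n R} (h : ∀ i j, Λ j i ≠ 0 → Z i j = V i j) :
    (Z * Λ).trace = (V * Λ).trace := by
  simp only [trace, diag, mul_apply]
  refine Finset.sum_congr rfl fun i _ => Finset.sum_congr rfl fun j _ => ?_
  by_cases hΛ : Λ j i = 0
  · simp [hΛ]
  · rw [h i j hΛ]

end Matrix

theorem SimpleGraph.trace_mul_eq_of_supported {n R : Type*} [Fintype n]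
    [NonUnitalNonAssocSemiring R] (G : SimpleGraph n) {Λ Z V : Matrix n n R}
    (hΛ : ∀ i j, i ≠ j → ¬ G.Adj i j → Λ i j = 0)
    (hZ : ∀ i j, (i = j ∨ G.Adj i j) → Z i j = V i j) :
    (Z * Λ).trace = (V * Λ).trace := by
  refine trace_mul_eq_of_eq_on_support fun i j hΛji => hZ i j ?_
  by_contra! hij
  exact hΛji (hΛ j i (Ne.symm hij.1) fun hji => hij.2 hji.symm)

theorem stmt14_general {d : ℕ} (G : SimpleGraph (Fin d))
    (V₁ V₂ Λ₁ Λ₂ Z₁ Z₂ Y : Matrix (Fin d) (Fin d) ℝ)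
    (hΛ₁p : ∀ i j, i ≠ j → ¬ G.Adj i j → Λ₁ i j = 0)
    (hΛ₂p : ∀ i j, i ≠ j → ¬ G.Adj i j → Λ₂ i j = 0)
    (hdual : (Matrix.fromBlocks Λ₁ (-1) (-1) Λ₂).PosSemidef)
    (hprimal : (Matrix.fromBlocks Z₁ Y Yᵀ Z₂).PosSemidef)
    (hZ₁ : ∀ i j, (i = j ∨ G.Adj i j) → Z₁ i j = V₁ i j)
    (hZ₂ : ∀ i j, (i = j ∨ G.Adj i j) → Z₂ i j = V₂ i j) :
    Z₁.trace + Z₂.trace - 2 * Y.trace ≥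
      V₁.trace + V₂.trace - (V₁ * Λ₁).trace - (V₂ * Λ₂).trace := by
  have weak_duality := two_mul_trace_le_of_posSemidef_fromBlocks hdual hprimal
  have pairing₁ : (Λ₁ * Z₁).trace = (V₁ * Λ₁).trace := by
    rw [trace_mul_comm, G.trace_mul_eq_of_supported hΛ₁p hZ₁]
  have pairing₂ : (Λ₂ * Z₂).trace = (V₂ * Λ₂).trace := by
    rw [trace_mul_comm, G.trace_mul_eq_of_supported hΛ₂p hZ₂]
  have trace₁ : Z₁.trace = V₁.trace := Finset.sum_congr rfl fun i _ => hZ₁ i i (Or.inl rfl)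
  have trace₂ : Z₂.trace = V₂.trace := Finset.sum_congr rfl fun i _ => hZ₂ i i (Or.inl rfl)
  linarith

theorem stmt14 {d : ℕ} (G : SimpleGraph (Fin d))
    (V₁ V₂ Λ₁ Λ₂ Z₁ Z₂ Y : Matrix (Fin d) (Fin d) ℝ)
    (h1 : V₁.PosDef) (h2 : V₂.PosDef)
    (hΛ₁s : Λ₁.IsSymm) (hΛ₂s : Λ₂.IsSymm) (hZ₁s : Z₁.IsSymm) (hZ₂s : Z₂.IsSymm)
    (hΛ₁p : ∀ i j, i ≠ j → ¬ G.Adj i j → Λ₁ i j = 0)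
    (hΛ₂p : ∀ i j, i ≠ j → ¬ G.Adj i j → Λ₂ i j = 0)
    (hdual : (Matrix.fromBlocks Λ₁ (-1) (-1) Λ₂).PosSemidef)
    (hprimal : (Matrix.fromBlocks Z₁ Y Yᵀ Z₂).PosSemidef)
    (hZ₁ : ∀ i j, (i = j ∨ G.Adj i j) → Z₁ i j = V₁ i j)
    (hZ₂ : ∀ i j, (i = j ∨ G.Adj i j) → Z₂ i j = V₂ i j) :
    Z₁.trace + Z₂.trace - 2 * Y.trace ≥
      V₁.trace + V₂.trace - (V₁ * Λ₁).trace - (V₂ * Λ₂).trace :=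
  stmt14_general G V₁ V₂ Λ₁ Λ₂ Z₁ Z₂ Y hΛ₁p hΛ₂p hdual hprimal hZ₁ hZ₂
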